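/- Let cohA be a reflexive symmetric relation on M and cohB a reflexive symmetric relation on N. For all (α,β), (α',β') in M × N: if cohA α α' ∧ cohB β β' (tensor coherence) then cohBef cohA cohB (α,β) (α',β'), and if cohBef cohA cohB (α,β) (α',β') then cohA α α' ∨ cohB β β' (par coherence). (The 'before' connective lies between the tensor and the par: A ⊗ B ⊸ A ◁ B ⊸ A ⅋ B, the identity on the web being a linear morphism in each case.) -/
import Mathlib

/-- Strict coherence of the "before" connective on the product of two webs. -/
def scohBef {M N : Type*} (cohA : M → M → Prop) (cohB : N → N → Prop)
    (p q : M × N) : Prop :=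
  (cohA p.1 q.1 ∧ p.1 ≠ q.1) ∨ (p.1 = q.1 ∧ cohB p.2 q.2 ∧ p.2 ≠ q.2)

/-- Coherence of the "before" connective on the product of two webs. -/
def cohBef {M N : Type*} (cohA : M → M → Prop) (cohB : N → N → Prop)
    (p q : M × N) : Prop :=
  p = q ∨ scohBef cohA cohB p q

/-- The "before" connective lies between the tensor and the par:
`A ⊗ B ⊸ A ◁ B ⊸ A ⅋ B` via the identity on the web. -/
theorem before_between_tensor_and_par {M N : Type*} (cohA : M → M → Prop)
    (cohB : N → N → Prop)
    (hArefl : ∀ x, cohA x x) (hAsymm : ∀ x y, cohA x y → cohA y x)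
    (hBrefl : ∀ x, cohB x x) (hBsymm : ∀ x y, cohB x y → cohB y x)
    (p q : M × N) :
    (cohA p.1 q.1 ∧ cohB p.2 q.2 → cohBef cohA cohB p q) ∧
      (cohBef cohA cohB p q → cohA p.1 q.1 ∨ cohB p.2 q.2) := by
  constructor
  · rintro ⟨hA, hB⟩
    by_cases h1 : p.1 = q.1
    · by_cases h2 : p.2 = q.2
      · exact Or.inl (Prod.ext h1 h2)
      · exact Or.inr (Or.inr ⟨h1, hB, h2⟩)
    · exact Or.inr (Or.inl ⟨hA, h1⟩)
  · rintro (rfl | ⟨hA, _⟩ | ⟨_, hB, _⟩)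
    · exact Or.inl (hArefl _)
    · exact Or.inl hA
    · exact Or.inr hB
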